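/- arXiv:1907.07915 — 2 statements merged into one kernel-verified Lean document; each statement's English description precedes it below -/
import Mathlib

section
/- Define G: R → R by G(x) = (cos(x) − cos(2x))/(π x²) (extended continuously at 0). Then the Fourier transform of G is FG(ξ) = ξ+2 for ξ ∈ [−2,−1], FG(ξ) = 1 for ξ ∈ [−1,1], FG(ξ) = 2−ξ for ξ ∈ [1,2], and FG(ξ) = 0 otherwise. In particular G is integrable, FG is supported on [−2,2], 0 ≤ FG ≤ 1, and FG = 1 on [−1,1]. -/
open MeasureTheory Real Set

/-- The flat-top kernel `G(x) = (cos x − cos 2x)/(π x²)` (extended continuously at `0`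
by its limit `3/(2π)`). -/
noncomputable def flatTopKernel (x : ℝ) : ℝ :=
  if x = 0 then 3 / (2 * Real.pi) else (Real.cos x - Real.cos (2 * x)) / (Real.pi * x ^ 2)

/-!
The claimed transform is the trapezoid `min 1 (max 0 (2 - |ξ|))`. It is continuous, compactly
supported and affine on `[-2,-1]`, `[-1,1]`, `[1,2]`, so integrating `(a t + b) e^{ct}` piece by
piece gives its Fourier transform at angular frequency `ω ≠ 0`: the boundary terms telescope to
`2 (cos ω - cos 2ω) / ω² = 2π G(ω)`. As `|G x| ≤ (4/π) / (1 + x²)`, `G` is integrable, and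
Fourier inversion (which only needs this identity for almost every `ω`) recovers the trapezoid
as the transform of `G`.
-/

open scoped Complex FourierTransform
open Complex (I)

/-- Fourier inversion in the normalisation `∫ g(y) e^{iyξ} dy` of the statement; Mathlib's `𝓕`
uses `e^{-2πi x t}`, whence the rescaling by `2π`. -/
theorem integral_mul_cexp_eq_of_fourier_ae {f g : ℝ → ℂ} (hf : Continuous f) (hfi : Integrable f)
    (hg : Integrable g) (hfg : 𝓕 f =ᵐ[volume] fun x => (2 * π : ℂ) * g (2 * π * x)) (ξ : ℝ) :
    ∫ y, g y * cexp (I * y * ξ) = f ξ := by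
  have h2π : 0 < 2 * π := by positivity
  have hFi : Integrable (𝓕 f) :=
    ((hg.comp_mul_left' h2π.ne').const_mul _).congr hfg.symm
  calc ∫ y, g y * cexp (I * y * ξ)
      = (2 * π : ℂ) * ∫ x, g (2 * π * x) * cexp (I * ↑(2 * π * x) * ξ) := by
        rw [Measure.integral_comp_mul_left (fun y => g y * cexp (I * y * ξ)),
          abs_of_pos (inv_pos.2 h2π), Complex.real_smul, ← mul_assoc, ← Complex.ofReal_ofNat,
          ← Complex.ofReal_mul, ← Complex.ofReal_mul, mul_inv_cancel₀ h2π.ne', Complex.ofReal_one,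
          one_mul]
    _ = ∫ x, cexp (↑(-2 * π * x * -ξ) * I) • 𝓕 f x := by
        rw [← integral_const_mul]
        refine integral_congr_ae (hfg.mono fun x hx => ?_)
        simp only [hx, smul_eq_mul]
        push_cast
        ring_nf
    _ = f ξ := by
        rw [← Real.fourier_real_eq_integral_exp_smul, ← Real.fourierInv_eq_fourier_neg,
          hf.fourierInv_fourier_eq hfi hFi]

theorem integral_affine_mul_cexp {c : ℂ} (hc : c ≠ 0) (a b : ℂ) (u v : ℝ) :
    ∫ t in u..v, (a * (t : ℂ) + b) * cexp (c * t) =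
      ((a * v + b) / c - a / c ^ 2) * cexp (c * v) -
      ((a * u + b) / c - a / c ^ 2) * cexp (c * u) := by
  have hderiv (t : ℝ) : HasDerivAt (fun s : ℝ => ((a * s + b) / c - a / c ^ 2) * cexp (c * s))
      ((a * t + b) * cexp (c * t)) t := by
    have hlin : HasDerivAt (fun s : ℂ => (a * s + b) / c - a / c ^ 2) (a / c) t := by
      simpa using
        ((((hasDerivAt_id (t : ℂ)).const_mul a).add_const b).div_const c).sub_const (a / c ^ 2)
    have hexp : HasDerivAt (fun s : ℂ => cexp (c * s)) (cexp (c * t) * c) t := by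
      simpa using ((hasDerivAt_id (t : ℂ)).const_mul c).cexp
    refine ((hlin.mul hexp).comp_ofReal).congr_deriv ?_
    field_simp
    ring
  exact intervalIntegral.integral_eq_sub_of_hasDerivAt (fun t _ => hderiv t)
    (Continuous.intervalIntegrable (by fun_prop) u v)

noncomputable def trapezoid (ξ : ℝ) : ℝ := min 1 (max 0 (2 - |ξ|))

section Trapezoid
variable {t : ℝ}

theorem trapezoid_eq_add_two (ht : t ∈ Icc (-2) (-1)) : trapezoid t = t + 2 := by
  rw [trapezoid, abs_of_nonpos (by linarith [ht.2]), max_eq_right, min_eq_right] <;>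
    linarith [ht.1, ht.2]

theorem trapezoid_eq_one (ht : t ∈ Icc (-1) 1) : trapezoid t = 1 := by
  have habs : |t| ≤ 1 := abs_le.2 ht
  rw [trapezoid, max_eq_right, min_eq_left] <;> linarith [abs_nonneg t]

theorem trapezoid_eq_two_sub (ht : t ∈ Icc 1 2) : trapezoid t = 2 - t := by
  rw [trapezoid, abs_of_nonneg (by linarith [ht.1]), max_eq_right, min_eq_right] <;>
    linarith [ht.1, ht.2]

theorem trapezoid_eq_zero (ht : 2 ≤ |t|) : trapezoid t = 0 := by
  rw [trapezoid, max_eq_left (by linarith), min_eq_right zero_le_one]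

end Trapezoid

theorem continuous_trapezoid : Continuous trapezoid := by
  unfold trapezoid; fun_prop

theorem ofReal_trapezoid_eq_ite (ξ : ℝ) : (trapezoid ξ : ℂ) =
    if ξ ∈ Icc (-2 : ℝ) (-1) then (ξ : ℂ) + 2
    else if ξ ∈ Icc (-1 : ℝ) 1 then 1
    else if ξ ∈ Icc (1 : ℝ) 2 then 2 - (ξ : ℂ)
    else 0 := by
  split_ifs with h₁ h₂ h₃
  · simp [trapezoid_eq_add_two h₁]
  · simp [trapezoid_eq_one h₂]
  · simp [trapezoid_eq_two_sub h₃]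
  · simp only [mem_Icc, not_and_or, not_le] at h₁ h₂ h₃
    rw [trapezoid_eq_zero (le_abs.2 (by grind)), Complex.ofReal_zero]

theorem support_trapezoid_subset : Function.support trapezoid ⊆ Ioc (-2) 2 := by
  intro t ht
  by_contra hmem
  simp only [mem_Ioc, not_and_or, not_lt, not_le] at hmem
  exact ht (trapezoid_eq_zero (le_abs.2 (by grind)))

theorem integrable_trapezoid : Integrable trapezoid :=
  continuous_trapezoid.integrable_of_hasCompactSupport
    (HasCompactSupport.intro' isCompact_Icc isClosed_Icc
      fun _ ht => Function.notMem_support.1 fun h =>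
        ht (Ioc_subset_Icc_self (support_trapezoid_subset h)))

theorem integral_cexp_mul_trapezoid {c : ℂ} (hc : c ≠ 0) :
    ∫ t : ℝ, cexp (c * t) * trapezoid t =
      2 * (Complex.cosh (2 * c) - Complex.cosh c) / c ^ 2 := by
  set h : ℝ → ℂ := fun t => cexp (c * t) * trapezoid t
  have hcont : Continuous h := by
    have := continuous_trapezoid
    fun_prop
  have hsupp : Function.support h ⊆ Ioc (-2) 2 :=
    fun t ht => support_trapezoid_subset fun h0 => ht (by simp [h, h0])
  have integral_piece {u v : ℝ} (huv : u ≤ v) (a b : ℂ)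
      (haff : ∀ t ∈ Icc u v, (trapezoid t : ℂ) = a * t + b) :
      ∫ t in u..v, h t = ((a * v + b) / c - a / c ^ 2) * cexp (c * v) -
        ((a * u + b) / c - a / c ^ 2) * cexp (c * u) := by
    rw [← integral_affine_mul_cexp hc]
    refine intervalIntegral.integral_congr fun t ht => ?_
    rw [uIcc_of_le huv] at ht
    simp only [h, haff t ht, mul_comm]
  rw [← intervalIntegral.integral_eq_integral_of_support_subset hsupp,
    ← intervalIntegral.integral_add_adjacent_intervals (b := 1)
      (hcont.intervalIntegrable _ _) (hcont.intervalIntegrable _ _),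
    ← intervalIntegral.integral_add_adjacent_intervals (b := -1)
      (hcont.intervalIntegrable _ _) (hcont.intervalIntegrable _ _),
    integral_piece (by norm_num) 1 2 fun t ht => by push_cast [trapezoid_eq_add_two ht]; ring,
    integral_piece (by norm_num) 0 1 fun t ht => by push_cast [trapezoid_eq_one ht]; ring,
    integral_piece (by norm_num) (-1) 2 fun t ht => by push_cast [trapezoid_eq_two_sub ht]; ring]
  have hexp2 : cexp (2 * c) = cexp c ^ 2 := by rw [← Complex.exp_nat_mul]; norm_num
  push_cast
  simp only [Complex.cosh, mul_neg, mul_one, Complex.exp_neg, mul_comm c 2, hexp2]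
  field_simp
  ring

theorem abs_cos_sub_cos_two_mul_le_two_mul_sq (x : ℝ) : |cos x - cos (2 * x)| ≤ 2 * x ^ 2 := by
  rw [abs_le]
  constructor <;> nlinarith [one_sub_sq_div_two_le_cos (x := x),
    one_sub_sq_div_two_le_cos (x := 2 * x), cos_le_one x, cos_le_one (2 * x)]

theorem abs_flatTopKernel_le (x : ℝ) : |flatTopKernel x| ≤ 4 / π * (1 + x ^ 2)⁻¹ := by
  rcases eq_or_ne x 0 with rfl | hx
  · rw [flatTopKernel, if_pos rfl, abs_of_pos (by positivity)]
    field_simp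
    norm_num
  · have hsq := abs_cos_sub_cos_two_mul_le_two_mul_sq x
    have htwo : |cos x - cos (2 * x)| ≤ 2 :=
      (abs_sub _ _).trans (by linarith [abs_cos_le_one x, abs_cos_le_one (2 * x)])
    have hden : 0 < π * x ^ 2 := by positivity
    rw [flatTopKernel, if_neg hx, abs_div, abs_of_pos hden, div_le_iff₀ hden]
    calc |cos x - cos (2 * x)| ≤ 4 * x ^ 2 / (1 + x ^ 2) := by
          rw [le_div_iff₀ (by positivity)]
          nlinarith [sq_nonneg x]
      _ = 4 / π * (1 + x ^ 2)⁻¹ * (π * x ^ 2) := by field_simp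

theorem integrable_flatTopKernel : Integrable flatTopKernel := by
  refine (integrable_inv_one_add_sq.const_mul (4 / π)).mono' ?_
    (ae_of_all _ abs_flatTopKernel_le)
  unfold flatTopKernel
  exact (Measurable.ite (measurableSet_singleton 0) measurable_const (by fun_prop))
    |>.aestronglyMeasurable

theorem fourier_trapezoid {x : ℝ} (hx : x ≠ 0) :
    𝓕 (fun t => (trapezoid t : ℂ)) x = (2 * π : ℂ) * flatTopKernel (2 * π * x) := by
  set ω := 2 * π * x
  have hω : ω ≠ 0 := mul_ne_zero (by positivity) hx
  have hc : (-ω : ℂ) * I ≠ 0 := by simp [hω]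
  calc 𝓕 (fun t => (trapezoid t : ℂ)) x = ∫ t : ℝ, cexp ((-ω : ℂ) * I * t) * trapezoid t := by
        rw [Real.fourier_real_eq_integral_exp_smul]
        congr with t
        rw [smul_eq_mul]
        push_cast [ω]
        ring_nf
    _ = 2 * (Complex.cos ω - Complex.cos (2 * ω)) / ω ^ 2 := by
        rw [integral_cexp_mul_trapezoid hc, ← mul_assoc, Complex.cosh_mul_I, Complex.cosh_mul_I,
          Complex.cos_neg, mul_neg, Complex.cos_neg, mul_pow, Complex.I_sq]
        ring
    _ = (2 * π : ℂ) * flatTopKernel ω := by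
        rw [flatTopKernel, if_neg hω]
        push_cast
        field_simp

/-- The Fourier transform `FG(ξ) = ∫ G(y) exp(iyξ) dy` of the flat-top kernel equals the
trapezoid function: `ξ + 2` on `[−2,−1]`, `1` on `[−1,1]`, `2 − ξ` on `[1,2]`, and `0`
otherwise.  In particular `G` is integrable, `FG` is supported on `[−2,2]`,
`0 ≤ FG ≤ 1` and `FG = 1` on `[−1,1]`. -/
theorem flatTopKernel_fourier :
    Integrable flatTopKernel ∧
    ∀ ξ : ℝ, (∫ y : ℝ, (flatTopKernel y : ℂ) * Complex.exp (Complex.I * y * ξ)) =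
      if ξ ∈ Icc (-2 : ℝ) (-1) then (ξ : ℂ) + 2
      else if ξ ∈ Icc (-1 : ℝ) 1 then 1
      else if ξ ∈ Icc (1 : ℝ) 2 then 2 - (ξ : ℂ)
      else 0 := by
  refine ⟨integrable_flatTopKernel, fun ξ => ?_⟩
  rw [← ofReal_trapezoid_eq_ite]
  exact integral_mul_cexp_eq_of_fourier_ae (Complex.continuous_ofReal.comp continuous_trapezoid)
    integrable_trapezoid.ofReal integrable_flatTopKernel.ofReal
    ((Measure.ae_ne volume 0).mono fun _ => fourier_trapezoid) ξ
end

section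
/- Let f_ε : R^d → [0,∞) be a bounded, uniformly continuous probability density vanishing at infinity, let A and B be d×d matrices with B nonsingular, and let Â_n be random matrices with ||Â_n − A||₂ = O_p(1/√n). Fix x₀ > 0. Then sup over ||z||_∞ ≤ x₀ and y ∈ R^d of |f_ε(z + Â_n B^{-1}y) − f_ε(z + A B^{-1}y)| converges to 0 in probability as n → ∞. -/
/-!
Write `x = B⁻¹y`; then `y` plays no further role and it suffices to bound
`|f(z + L x) - f(z + A x)|` uniformly in `x` and in bounded `z` once `‖L - A‖` is small.
Where `‖A x‖` is bounded, so is `‖x‖` because `A` is invertible, and uniform continuity applies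
since the two arguments differ by `(L - A) x`. Where `‖A x‖` is large, so is `‖L x‖` (for `L`
close to `A`), and both values are small because `f` vanishes at infinity.
Finally `‖Â_n - A‖ = O_p(n^{-1/2})` makes `‖Â_n - A‖ ≥ η` improbable for every fixed `η > 0`.
-/

open MeasureTheory ProbabilityTheory Filter Bornology Metric Topology

section Stability

variable {𝕜 E F X : Type*} [NontriviallyNormedField 𝕜]
  [NormedAddCommGroup E] [NormedSpace 𝕜 E] [NormedAddCommGroup F] [NormedSpace 𝕜 F]
  [PseudoMetricSpace X]

theorem norm_apply_le_two_mul_norm_apply_of_norm_sub_mul_le {A L : E →L[𝕜] F} {K : NNReal}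
    (hA : AntilipschitzWith K A) (hL : ‖L - A‖ * K ≤ 1 / 2) (x : E) :
    ‖A x‖ ≤ 2 * ‖L x‖ := by
  have hx : ‖x‖ ≤ K * ‖A x‖ := hA.le_mul_norm (map_zero A) x
  have hLA : ‖(L - A) x‖ ≤ ‖A x‖ / 2 :=
    calc ‖(L - A) x‖ ≤ ‖L - A‖ * ‖x‖ := (L - A).le_opNorm x
      _ ≤ ‖L - A‖ * (K * ‖A x‖) := by gcongr
      _ = ‖L - A‖ * K * ‖A x‖ := by ring
      _ ≤ 1 / 2 * ‖A x‖ := by gcongr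
      _ = ‖A x‖ / 2 := by ring
  have : ‖A x‖ ≤ ‖L x‖ + ‖(L - A) x‖ := by
    simpa only [sub_apply, sub_sub_cancel] using norm_sub_le (L x) ((L - A) x)
  linarith

theorem exists_forall_dist_comp_add_apply_lt {f : F → X} {c : X} (hf : UniformContinuous f)
    (hf₀ : Tendsto f (cobounded F) (𝓝 c)) {A : E →L[𝕜] F} {K : NNReal}
    (hA : AntilipschitzWith K A) (R : ℝ) {ε : ℝ} (hε : 0 < ε) :
    ∃ η > 0, ∀ L : E →L[𝕜] F, ‖L - A‖ < η →
      ∀ z : F, ‖z‖ ≤ R → ∀ x : E, dist (f (z + L x)) (f (z + A x)) < ε := by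
  obtain ⟨M, -, hM⟩ :=
    hasBasis_cobounded_norm.tendsto_left_iff.mp hf₀ _ (ball_mem_nhds c (half_pos hε))
  obtain ⟨ρ, hρ, hfρ⟩ := uniformContinuous_iff.mp hf ε hε
  set r : ℝ := K * (2 * (M + R))
  refine ⟨min (ρ / (|r| + 1)) (1 / (2 * K + 1)), by positivity, fun L hL z hz x => ?_⟩
  have hLρ : ‖L - A‖ * (|r| + 1) < ρ :=
    (lt_div_iff₀ (by positivity)).mp (hL.trans_le (min_le_left _ _))
  have hLK : ‖L - A‖ * K ≤ 1 / 2 := by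
    have : ‖L - A‖ * (2 * K + 1) < 1 :=
      (lt_div_iff₀ (by positivity)).mp (hL.trans_le (min_le_right _ _))
    nlinarith [norm_nonneg (L - A)]
  rcases le_or_gt ‖A x‖ (2 * (M + R)) with hAx | hAx
  · refine hfρ ?_
    have hx : ‖x‖ ≤ r := (hA.le_mul_norm (map_zero A) x).trans
      (mul_le_mul_of_nonneg_left hAx K.coe_nonneg)
    calc dist (z + L x) (z + A x) = ‖(L - A) x‖ := by
          rw [dist_add_left, dist_eq_norm, sub_apply]
      _ ≤ ‖L - A‖ * ‖x‖ := (L - A).le_opNorm x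
      _ ≤ ‖L - A‖ * (|r| + 1) := by gcongr; linarith [le_abs_self r]
      _ < ρ := hLρ
  · have hLx := norm_apply_le_two_mul_norm_apply_of_norm_sub_mul_le hA hLK x
    have hfar : ∀ w : F, M + R < ‖w‖ → M ≤ ‖z + w‖ := fun w hw => by
      have := norm_sub_norm_le w (-z)
      rw [sub_neg_eq_add, norm_neg, add_comm] at this
      linarith
    have h₁ := hM (hfar (L x) (by linarith [norm_nonneg (A x)]))
    have h₂ := hM (hfar (A x) (by linarith [norm_nonneg (A x)]))
    rw [mem_ball] at h₁ h₂
    linarith [dist_triangle_right (f (z + L x)) (f (z + A x)) c]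

end Stability

theorem isBounded_setOf_forall_abs_le {ι : Type*} [Fintype ι] (r : ℝ) :
    IsBounded {z : EuclideanSpace ℝ ι | ∀ i, |z i| ≤ r} :=
  ((PiLp.antilipschitzWith_ofLp 2 _).isBounded_preimage
    (isBounded_Icc (fun _ : ι => -r) fun _ => r)).subset
    fun _ hz => ⟨fun i => (abs_le.mp (hz i)).1, fun i => (abs_le.mp (hz i)).2⟩

theorem tendsto_measure_const_le_of_tight_sqrt_mul {Ω : Type*} [MeasurableSpace Ω]
    {μ : Measure Ω} (D : ℕ → Ω → ℝ)
    (hD : ∀ δ : ℝ, 0 < δ → ∃ C : ℝ, 0 < C ∧ ∀ n : ℕ, 1 ≤ n →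
      μ {ω | C / Real.sqrt n ≤ D n ω} ≤ ENNReal.ofReal δ)
    {η : ℝ} (hη : 0 < η) :
    Tendsto (fun n => μ {ω | η ≤ D n ω}) atTop (𝓝 0) := by
  refine ENNReal.tendsto_nhds_zero.mpr fun ε hε => ?_
  obtain ⟨δ, -, hδ₀, hδε⟩ := ENNReal.lt_iff_exists_real_btwn.mp hε
  obtain ⟨C, -, hC⟩ := hD δ (ENNReal.ofReal_pos.mp hδ₀)
  have hCη : ∀ᶠ n : ℕ in atTop, C / Real.sqrt n < η :=
    ((tendsto_const_nhds.div_atTop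
      (Real.tendsto_sqrt_atTop.comp tendsto_natCast_atTop_atTop)).eventually (gt_mem_nhds hη))
  filter_upwards [hCη, eventually_ge_atTop 1] with n hn hn₁
  calc μ {ω | η ≤ D n ω} ≤ μ {ω | C / Real.sqrt n ≤ D n ω} :=
        measure_mono fun ω hω => hn.le.trans hω
    _ ≤ ENNReal.ofReal δ := hC n hn₁
    _ ≤ ε := hδε.le

theorem density_uniform_stability_general {d : ℕ}
    {Ω : Type*} [MeasureSpace Ω]
    (fε : EuclideanSpace ℝ (Fin d) → ℝ)
    (hucont : UniformContinuous fε)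
    (hvanish : Tendsto fε (cocompact (EuclideanSpace ℝ (Fin d))) (nhds 0))
    (A B : EuclideanSpace ℝ (Fin d) →L[ℝ] EuclideanSpace ℝ (Fin d))
    (hA : IsUnit A)
    (Ahat : ℕ → Ω → (EuclideanSpace ℝ (Fin d) →L[ℝ] EuclideanSpace ℝ (Fin d)))
    (hOp : ∀ δ : ℝ, 0 < δ → ∃ C : ℝ, 0 < C ∧ ∀ n : ℕ, 1 ≤ n →
      ℙ {ω | C / Real.sqrt n ≤ ‖Ahat n ω - A‖} ≤ ENNReal.ofReal δ)
    (x₀ : ℝ) :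
    ∀ δ : ℝ, 0 < δ →
      Tendsto (fun n => ℙ {ω |
          δ ≤ ⨆ p : {z : EuclideanSpace ℝ (Fin d) // ∀ i, |z i| ≤ x₀}
                × EuclideanSpace ℝ (Fin d),
            |fε ((p.1 : EuclideanSpace ℝ (Fin d)) + Ahat n ω (Ring.inverse B p.2))
              - fε ((p.1 : EuclideanSpace ℝ (Fin d)) + A (Ring.inverse B p.2))|})
        atTop (nhds 0) := by
  intro δ hδ
  obtain ⟨R, hR⟩ := (isBounded_setOf_forall_abs_le (ι := Fin d) x₀).exists_norm_le
  obtain ⟨η, hη, hstab⟩ := exists_forall_dist_comp_add_apply_lt hucont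
    (cobounded_eq_cocompact (α := EuclideanSpace ℝ (Fin d)) ▸ hvanish)
    ((ContinuousLinearEquiv.unitsEquiv ℝ _ hA.unit).antilipschitz : AntilipschitzWith _ A)
    R (half_pos hδ)
  refine tendsto_of_tendsto_of_tendsto_of_le_of_le tendsto_const_nhds
    (tendsto_measure_const_le_of_tight_sqrt_mul _ hOp hη) (fun _ => zero_le)
    fun n => measure_mono fun ω hω => ?_
  by_contra! hclose
  have hsup : ⨆ p : {z : EuclideanSpace ℝ (Fin d) // ∀ i, |z i| ≤ x₀} × EuclideanSpace ℝ (Fin d),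
      |fε (p.1 + Ahat n ω (Ring.inverse B p.2)) - fε (p.1 + A (Ring.inverse B p.2))| ≤ δ / 2 :=
    Real.iSup_le (fun p => (hstab _ (not_le.mp hclose) p.1 (hR p.1 p.1.2) _).le) (half_pos hδ).le
  exact (half_lt_self hδ).not_ge (hω.trans hsup)

/-- Uniform stability of a bounded, uniformly continuous density vanishing at infinity
under an `O_p(1/√n)`-consistent estimate of the transition matrix: with `A`, `B`
nonsingular and `‖Â_n − A‖₂ = O_p(1/√n)`,
`sup_{‖z‖_∞ ≤ x₀, y ∈ ℝ^d} |f_ε(z + Â_nB⁻¹y) − f_ε(z + AB⁻¹y)| →_p 0`. -/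
theorem density_uniform_stability {d : ℕ}
    {Ω : Type*} [MeasureSpace Ω] [IsProbabilityMeasure (ℙ : Measure Ω)]
    (fε : EuclideanSpace ℝ (Fin d) → ℝ)
    (hpos : ∀ x, 0 ≤ fε x) (hint : Integrable fε) (hprob : ∫ x, fε x = 1)
    (hbdd : ∃ C : ℝ, ∀ x, fε x ≤ C)
    (hucont : UniformContinuous fε)
    (hvanish : Tendsto fε (cocompact (EuclideanSpace ℝ (Fin d))) (nhds 0))
    (A B : EuclideanSpace ℝ (Fin d) →L[ℝ] EuclideanSpace ℝ (Fin d))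
    (hA : IsUnit A) (hB : IsUnit B)
    (Ahat : ℕ → Ω → (EuclideanSpace ℝ (Fin d) →L[ℝ] EuclideanSpace ℝ (Fin d)))
    (hAmeas : ∀ n, Measurable (Ahat n))
    (hOp : ∀ δ : ℝ, 0 < δ → ∃ C : ℝ, 0 < C ∧ ∀ n : ℕ, 1 ≤ n →
      ℙ {ω | C / Real.sqrt n ≤ ‖Ahat n ω - A‖} ≤ ENNReal.ofReal δ)
    (x₀ : ℝ) (hx₀ : 0 < x₀) :
    ∀ δ : ℝ, 0 < δ →
      Tendsto (fun n => ℙ {ω |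
          δ ≤ ⨆ p : {z : EuclideanSpace ℝ (Fin d) // ∀ i, |z i| ≤ x₀}
                × EuclideanSpace ℝ (Fin d),
            |fε ((p.1 : EuclideanSpace ℝ (Fin d)) + Ahat n ω (Ring.inverse B p.2))
              - fε ((p.1 : EuclideanSpace ℝ (Fin d)) + A (Ring.inverse B p.2))|})
        atTop (nhds 0) :=
  density_uniform_stability_general fε hucont hvanish A B hA Ahat hOp x₀
end
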